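/- In the dicot universe under misère play, * + * ≡ 0; that is, for every dicot game X, the misère outcome of * + * + X equals the misère outcome of X. -/

import Mathlib

universe u

namespace SetTheory

/-- Pre-games, as in Mathlib (December 2024), since removed from Mathlib. -/
inductive PGame : Type (u + 1)
  | mk : ∀ α β : Type u, (α → PGame) → (β → PGame) → PGame

namespace PGame

def LeftMoves : PGame → Type u
  | mk l _ _ _ => l

def RightMoves : PGame → Type u
  | mk _ r _ _ => r

def moveLeft : ∀ g : PGame, LeftMoves g → PGame
  | mk _l _ L _ => L

def moveRight : ∀ g : PGame, RightMoves g → PGame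
  | mk _ _r _ R => R

inductive IsOption : PGame → PGame → Prop
  | moveLeft {x : PGame} (i : x.LeftMoves) : IsOption (x.moveLeft i) x
  | moveRight {x : PGame} (i : x.RightMoves) : IsOption (x.moveRight i) x

def Subsequent : PGame → PGame → Prop :=
  Relation.TransGen IsOption

instance : Zero PGame :=
  ⟨⟨PEmpty, PEmpty, PEmpty.elim, PEmpty.elim⟩⟩

def neg : PGame → PGame
  | ⟨l, r, L, R⟩ => ⟨r, l, fun i => neg (R i), fun i => neg (L i)⟩

instance : Neg PGame :=
  ⟨neg⟩

noncomputable instance : Add PGame.{u} :=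
  ⟨fun x y => by
    induction x generalizing y with | mk xl xr _ _ IHxl IHxr => _
    induction y with | mk yl yr yL yR IHyl IHyr => _
    have y := mk yl yr yL yR
    refine ⟨xl ⊕ yl, xr ⊕ yr, Sum.rec ?_ ?_, Sum.rec ?_ ?_⟩
    · exact fun i => IHxl i y
    · exact IHyl
    · exact fun i => IHxr i y
    · exact IHyr⟩

def star : PGame.{u} :=
  ⟨PUnit, PUnit, fun _ => 0, fun _ => 0⟩

end PGame

end SetTheory

open SetTheory

namespace Sprigs

/-- Partizan games (in the lowest universe). -/
abbrev PG : Type 1 := PGame.{0}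

/-- Winning predicates moving first under misère play:
`(mw G).1` = Left wins moving first; `(mw G).2` = Right wins moving first. -/
def mw : PG → Prop × Prop
  | PGame.mk α β L R =>
    ((IsEmpty α ∨ ∃ i, ¬ (mw (L i)).2), (IsEmpty β ∨ ∃ j, ¬ (mw (R j)).1))

/-- Winning predicates moving first under normal play. -/
def nw : PG → Prop × Prop
  | PGame.mk _ _ L R => ((∃ i, ¬ (nw (L i)).2), (∃ j, ¬ (nw (R j)).1))

/-- Outcome classes. -/
inductive Outcome : Type
  | L | R | N | P
deriving DecidableEq

/-- The outcome determined by "Left wins moving first" and "Right wins moving first". -/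
noncomputable def outcomeOf (wl wr : Prop) : Outcome :=
  haveI := Classical.propDecidable wl
  haveI := Classical.propDecidable wr
  if wl then (if wr then .N else .L) else (if wr then .R else .P)

/-- Misère-play outcome. -/
noncomputable def mo (G : PG) : Outcome := outcomeOf (mw G).1 (mw G).2

/-- Normal-play outcome. -/
noncomputable def no (G : PG) : Outcome := outcomeOf (nw G).1 (nw G).2

/-- Partial order on outcomes: R < P < L and R < N < L, with P, N incomparable. -/
def Outcome.le : Outcome → Outcome → Prop
  | .R, _ => True
  | _, .L => True
  | a, b => a = b

def Outcome.lt (a b : Outcome) : Prop := Outcome.le a b ∧ a ≠ b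

/-- Dicot games: every subposition has moves for both players or neither. -/
def Dicot : PG → Prop
  | PGame.mk α β L R =>
    ((IsEmpty α ∧ IsEmpty β) ∨ (Nonempty α ∧ Nonempty β)) ∧
      (∀ i, Dicot (L i)) ∧ (∀ j, Dicot (R j))

/-- Ordinal sum `G : H`. -/
def ordSum (G : PG) : PG → PGame
  | PGame.mk α β L R =>
    PGame.mk (G.LeftMoves ⊕ α) (G.RightMoves ⊕ β)
      (Sum.elim G.moveLeft (fun a => ordSum G (L a)))
      (Sum.elim G.moveRight (fun b => ordSum G (R b)))

/-- Canonical form of a natural number as a game. -/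
def natGame : ℕ → PGame
  | 0 => PGame.mk PEmpty PEmpty PEmpty.elim PEmpty.elim
  | n + 1 => PGame.mk PUnit PEmpty (fun _ => natGame n) PEmpty.elim

/-- Canonical form of an integer as a game. -/
def intGame (m : ℤ) : PG := if 0 ≤ m then natGame m.toNat else -natGame (-m).toNat

/-- Canonical form of the dyadic rational `m / 2 ^ n` as a game. -/
def dGame : ℕ → ℤ → PGame
  | 0, m => intGame m
  | n + 1, m =>
    if m % 2 = 0 then dGame n (m / 2)
    else PGame.mk PUnit PUnit (fun _ => dGame n ((m - 1) / 2)) (fun _ => dGame n ((m + 1) / 2))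

/-- A rational number is dyadic if its denominator is a power of two. -/
def IsDyadic (q : ℚ) : Prop := ∃ n : ℕ, q.den = 2 ^ n

/-- The canonical-form game of a dyadic rational. -/
def qGame (q : ℚ) : PG := dGame (Nat.log 2 q.den) q.num

/-- The Sprig `* : x` for a dyadic rational `x`. -/
def sprig (q : ℚ) : PG := ordSum PGame.star (qGame q)

/-- The Sprig `* : x̄` where `x̄` is the conjugate of the dyadic rational `x`. -/
def sprigNeg (q : ℚ) : PG := ordSum PGame.star (-qGame q)

/-- Disjunctive sum of a list of games. -/
noncomputable def listSum (l : List PG) : PG := l.foldr (· + ·) 0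

/-- The position `(X, Y) = Σ_{x ∈ X} *:x + Σ_{y ∈ Y} *:(-y)`. -/
noncomputable def sprigsGame (X Y : List ℚ) : PG := listSum (X.map sprig ++ Y.map sprigNeg)

/-- The minimum of a nonempty multiset of rationals (0 for the empty multiset). -/
noncomputable def mmin (s : Multiset ℚ) : ℚ :=
  if h : s = 0 then 0 else
    s.toFinset.min' (by rwa [Multiset.toFinset_nonempty])

/-- The edge `ε` computed from the reduced multisets `X' = X \ Y` and `Y' = Y \ X`. -/
noncomputable def edge (X Y : Multiset ℚ) : ℚ :=
  if X - Y = 0 ∨ Y - X = 0 then 0 else mmin (X - Y) - mmin (Y - X)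

/-- The universe `S` of finite sums of Sprigs (and `*`). -/
inductive InS : PG → Prop
  | star : InS PGame.star
  | sprig {q : ℚ} (h : IsDyadic q) : InS (sprig q)
  | sprigNeg {q : ℚ} (h : IsDyadic q) : InS (sprigNeg q)
  | add {a b : PG} : InS a → InS b → InS (a + b)

/-- A universe: a set of games closed under disjunctive sum and followers. -/
def IsUniverse (S : Set PG) : Prop :=
  (∀ a ∈ S, ∀ b ∈ S, a + b ∈ S) ∧ ∀ a ∈ S, ∀ b, PGame.Subsequent b a → b ∈ S

end Sprigs

/-! Induction on `X`. Moving in one `*` of `* + * + X` leaves `* + X`, where the opponent can answer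
`* → 0` and hand `X` back to the original mover; so that move wins only if the mover already wins
`X` moving first, while moves inside `X` are handled by induction. Conversely, if the mover wins `X`
moving first by having no move there, dicotness leaves `X` with no moves at all, and then `* + X`
is lost by whoever starts it. -/

namespace SetTheory.PGame

inductive Relabelling : PGame.{u} → PGame.{u} → Prop
  | mk : ∀ {x y : PGame.{u}} (L : x.LeftMoves ≃ y.LeftMoves) (R : x.RightMoves ≃ y.RightMoves),
      (∀ i, Relabelling (x.moveLeft i) (y.moveLeft (L i))) →
        (∀ j, Relabelling (x.moveRight j) (y.moveRight (R j))) → Relabelling x y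

namespace Relabelling

theorem refl (x : PGame.{u}) : x.Relabelling x := by
  induction x with
  | mk _ _ _ _ ihL ihR => exact ⟨Equiv.refl _, Equiv.refl _, ihL, ihR⟩

theorem zero_add (x : PGame.{u}) : (0 + x).Relabelling x := by
  induction x with
  | mk xl xr _ _ ihL ihR =>
    refine ⟨Equiv.emptySum PEmpty xl, Equiv.emptySum PEmpty xr, ?_, ?_⟩
    · rintro (⟨⟨⟩⟩ | i)
      exact ihL i
    · rintro (⟨⟨⟩⟩ | j)
      exact ihR j

theorem add_zero (x : PGame.{u}) : (x + 0).Relabelling x := by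
  induction x with
  | mk xl xr _ _ ihL ihR =>
    refine ⟨Equiv.sumEmpty xl PEmpty, Equiv.sumEmpty xr PEmpty, ?_, ?_⟩
    · rintro (i | ⟨⟨⟩⟩)
      exact ihL i
    · rintro (j | ⟨⟨⟩⟩)
      exact ihR j

theorem add_congr {w x y z : PGame.{u}} (hwx : w.Relabelling x) (hyz : y.Relabelling z) :
    (w + y).Relabelling (x + z) := by
  induction w generalizing x y z with
  | mk wl wr wL wR ihwL ihwR =>
  induction y generalizing z with
  | mk yl yr yL yR ihyL ihyR =>
  obtain ⟨L₁, R₁, hL₁, hR₁⟩ := hwx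
  obtain ⟨L₂, R₂, hL₂, hR₂⟩ := hyz
  cases x
  cases z
  refine ⟨L₁.sumCongr L₂, R₁.sumCongr R₂, ?_, ?_⟩
  · rintro (i | j)
    · exact ihwL i (hL₁ i) ⟨L₂, R₂, hL₂, hR₂⟩
    · exact ihyL j (hL₂ j)
  · rintro (i | j)
    · exact ihwR i (hR₁ i) ⟨L₂, R₂, hL₂, hR₂⟩
    · exact ihyR j (hR₂ j)

end Relabelling

end SetTheory.PGame

namespace Sprigs

open PGame

theorem mw_fst_iff (G : PG) :
    (mw G).1 ↔ IsEmpty G.LeftMoves ∨ ∃ i, ¬ (mw (G.moveLeft i)).2 := by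
  cases G; rfl

theorem mw_snd_iff (G : PG) :
    (mw G).2 ↔ IsEmpty G.RightMoves ∨ ∃ j, ¬ (mw (G.moveRight j)).1 := by
  cases G; rfl

theorem mw_add_fst_iff (G H : PG) :
    (mw (G + H)).1 ↔ (IsEmpty G.LeftMoves ∧ IsEmpty H.LeftMoves) ∨
      (∃ i, ¬ (mw (G.moveLeft i + H)).2) ∨ ∃ i, ¬ (mw (G + H.moveLeft i)).2 := by
  cases G; cases H
  exact (mw_fst_iff _).trans (or_congr isEmpty_sum Sum.exists)

theorem mw_add_snd_iff (G H : PG) :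
    (mw (G + H)).2 ↔ (IsEmpty G.RightMoves ∧ IsEmpty H.RightMoves) ∨
      (∃ j, ¬ (mw (G.moveRight j + H)).1) ∨ ∃ j, ¬ (mw (G + H.moveRight j)).1 := by
  cases G; cases H
  exact (mw_snd_iff _).trans (or_congr isEmpty_sum Sum.exists)

theorem mw_eq_of_relabelling {G H : PG} (h : G.Relabelling H) : mw G = mw H := by
  induction h with
  | mk L R _ _ ihL ihR =>
    refine Prod.ext (propext ?_) (propext ?_)
    · rw [mw_fst_iff, mw_fst_iff]
      exact or_congr L.isEmpty_congr (L.exists_congr fun i => by rw [ihL i])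
    · rw [mw_snd_iff, mw_snd_iff]
      exact or_congr R.isEmpty_congr (R.exists_congr fun j => by rw [ihR j])

theorem mw_zero_add (G : PG) : mw (0 + G) = mw G :=
  mw_eq_of_relabelling (.zero_add G)

theorem mw_fst_of_not_mw_snd_star_add {G : PG} (h : ¬ (mw (star + G)).2) : (mw G).1 := by
  rw [mw_add_snd_iff] at h
  have h0 : (mw (0 + G)).1 := not_not.1 fun h' => h (.inr (.inl ⟨PUnit.unit, h'⟩))
  rwa [mw_zero_add] at h0

theorem mw_snd_of_not_mw_fst_star_add {G : PG} (h : ¬ (mw (star + G)).1) : (mw G).2 := by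
  rw [mw_add_fst_iff] at h
  have h0 : (mw (0 + G)).2 := not_not.1 fun h' => h (.inr (.inl ⟨PUnit.unit, h'⟩))
  rwa [mw_zero_add] at h0

theorem not_mw_snd_star_add_of_isEmpty {G : PG} (hL : IsEmpty G.LeftMoves)
    (hR : IsEmpty G.RightMoves) : ¬ (mw (star + G)).2 := by
  rw [mw_add_snd_iff]
  rintro (⟨h, -⟩ | ⟨j, hj⟩ | ⟨j, -⟩)
  · exact h.false PUnit.unit
  · have h0 : ¬ (mw (0 + G)).1 := hj
    rw [mw_zero_add, mw_fst_iff] at h0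
    exact h0 (Or.inl hL)
  · exact hR.false j

theorem not_mw_fst_star_add_of_isEmpty {G : PG} (hL : IsEmpty G.LeftMoves)
    (hR : IsEmpty G.RightMoves) : ¬ (mw (star + G)).1 := by
  rw [mw_add_fst_iff]
  rintro (⟨h, -⟩ | ⟨i, hi⟩ | ⟨i, -⟩)
  · exact h.false PUnit.unit
  · have h0 : ¬ (mw (0 + G)).2 := hi
    rw [mw_zero_add, mw_snd_iff] at h0
    exact h0 (Or.inl hR)
  · exact hL.false i

theorem mw_star_add_star_moveLeft_add (G : PG) (i : (star + star : PG).LeftMoves) :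
    mw ((star + star : PG).moveLeft i + G) = mw (star + G) := by
  rcases i with _ | _
  · exact mw_eq_of_relabelling ((Relabelling.zero_add star).add_congr (.refl G))
  · exact mw_eq_of_relabelling ((Relabelling.add_zero star).add_congr (.refl G))

theorem mw_star_add_star_moveRight_add (G : PG) (j : (star + star : PG).RightMoves) :
    mw ((star + star : PG).moveRight j + G) = mw (star + G) := by
  rcases j with _ | _
  · exact mw_eq_of_relabelling ((Relabelling.zero_add star).add_congr (.refl G))
  · exact mw_eq_of_relabelling ((Relabelling.add_zero star).add_congr (.refl G))

theorem mw_star_add_star_add_fst_iff (G : PG) :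
    (mw (star + star + G)).1 ↔
      ¬ (mw (star + G)).2 ∨ ∃ i, ¬ (mw (star + star + G.moveLeft i)).2 := by
  have hne : ¬ IsEmpty (star + star : PG).LeftMoves := fun h => h.false (Sum.inl PUnit.unit)
  have : Nonempty (star + star : PG).LeftMoves := ⟨Sum.inl PUnit.unit⟩
  simp only [mw_add_fst_iff, hne, false_and, false_or, mw_star_add_star_moveLeft_add, exists_const]

theorem mw_star_add_star_add_snd_iff (G : PG) :
    (mw (star + star + G)).2 ↔
      ¬ (mw (star + G)).1 ∨ ∃ j, ¬ (mw (star + star + G.moveRight j)).1 := by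
  have hne : ¬ IsEmpty (star + star : PG).RightMoves := fun h => h.false (Sum.inl PUnit.unit)
  have : Nonempty (star + star : PG).RightMoves := ⟨Sum.inl PUnit.unit⟩
  simp only [mw_add_snd_iff, hne, false_and, false_or, mw_star_add_star_moveRight_add, exists_const]

theorem Dicot.isEmpty_leftMoves_iff {G : PG} (hG : Dicot G) :
    IsEmpty G.LeftMoves ↔ IsEmpty G.RightMoves := by
  cases G
  obtain ⟨⟨hl, hr⟩ | ⟨⟨i⟩, ⟨j⟩⟩, -⟩ := hG
  · exact iff_of_true hl hr
  · exact iff_of_false (fun h => h.false i) (fun h => h.false j)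

theorem mw_star_add_star_add {G : PG} (hG : Dicot G) : mw (star + star + G) = mw G := by
  induction G with
  | mk α β L R ihL ihR =>
  have hMoves := hG.isEmpty_leftMoves_iff
  obtain ⟨-, hDL, hDR⟩ := hG
  have hL : ∀ i, mw (star + star + (mk α β L R).moveLeft i) = mw ((mk α β L R).moveLeft i) :=
    fun i => ihL i (hDL i)
  have hR : ∀ j, mw (star + star + (mk α β L R).moveRight j) = mw ((mk α β L R).moveRight j) :=
    fun j => ihR j (hDR j)
  refine Prod.ext (propext ?_) (propext ?_)
  · rw [mw_star_add_star_add_fst_iff, mw_fst_iff]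
    simp only [hL]
    constructor
    · rintro (h | h)
      · exact (mw_fst_iff _).1 (mw_fst_of_not_mw_snd_star_add h)
      · exact .inr h
    · rintro (h | h)
      · exact .inl (not_mw_snd_star_add_of_isEmpty h (hMoves.1 h))
      · exact .inr h
  · rw [mw_star_add_star_add_snd_iff, mw_snd_iff]
    simp only [hR]
    constructor
    · rintro (h | h)
      · exact (mw_snd_iff _).1 (mw_snd_of_not_mw_fst_star_add h)
      · exact .inr h
    · rintro (h | h)
      · exact .inl (not_mw_fst_star_add_of_isEmpty (hMoves.2 h) h)
      · exact .inr h

/-- `* + * ≡ 0` modulo the dicot universe under misère play. -/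
theorem stmt3 : ∀ X : PG, Dicot X → mo (PGame.star + PGame.star + X) = mo X := by
  intro X hX
  rw [mo, mo, mw_star_add_star_add hX]

end Sprigs
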